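/- Let n ≥ 2 and ε = e^{2πi/n}. Any polynomial with zero constant term in the elementary symmetric polynomials P₂, …, P_{n-1} (in n variables) vanishes at X₁ = (ε^{n-1}, …, ε, 1); hence P_n does not lie in the ℂ-subalgebra generated by P₂, …, P_{n-1}. -/

import Mathlib

/-! Evaluation at `X₁` and taking the constant term are both `ℂ`-algebra maps, so they agree
on the subalgebra generated by `P₂, …, P_{n-1}` once they agree on these generators. The
coordinates of `X₁` are the `n` distinct `n`-th roots of unity, so `∏ (T - X₁ i) = T ^ n - 1`,
and Vieta's formulas give `P_j(X₁) = 0 = P_j(0)` for `0 < j < n`. But `P_n(X₁) = ∏ X₁ i ≠ 0`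
while `P_n(0) = 0`, so `P_n` is not in that subalgebra. -/

section

open Polynomial

theorem Multiset.esymm_eq_zero_of_prod_X_sub_C_eq_X_pow_sub_one {R : Type*} [CommRing R]
    {s : Multiset R} (hs : (s.map fun t => X - C t).prod = X ^ Multiset.card s - 1)
    {j : ℕ} (hj₀ : 0 < j) (hj : j < Multiset.card s) : s.esymm j = 0 := by
  have hcoeff := Multiset.prod_X_sub_C_coeff s (k := Multiset.card s - j) (by omega)
  rw [hs, Nat.sub_sub_self hj.le, coeff_sub, coeff_X_pow, coeff_one, if_neg (by omega),
    if_neg (by omega), sub_zero] at hcoeff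
  exact ((isUnit_neg_one.pow j).mul_right_eq_zero).mp hcoeff.symm

theorem IsPrimitiveRoot.prod_X_sub_C_pow_rev_eq_X_pow_sub_one {R : Type*} [CommRing R] [IsDomain R]
    {ζ : R} {n : ℕ} (hζ : IsPrimitiveRoot ζ n) (hn : 0 < n) :
    ∏ i : Fin n, (X - C (ζ ^ (n - 1 - (i : ℕ)))) = X ^ n - 1 := by
  rw [← Fintype.prod_equiv Fin.revPerm (fun i => X - C (ζ ^ (i : ℕ))) _
      (fun i => by simp only [Fin.revPerm_apply, Fin.val_rev]; congr 3; omega),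
    Fin.prod_univ_eq_prod_range (fun i => X - C (ζ ^ i)),
    ← C_1, X_pow_sub_C_eq_prod hζ hn (one_pow n)]
  simp

end

namespace MvPolynomial

variable {σ R : Type*} [CommRing R]

theorem eval_eq_constantCoeff_of_mem_adjoin {x : σ → R} {s : Set (MvPolynomial σ R)}
    (hs : ∀ p ∈ s, eval x p = constantCoeff p) {f : MvPolynomial σ R}
    (hf : f ∈ Algebra.adjoin R s) : eval x f = constantCoeff f := by
  simpa using
    AlgHom.adjoin_le_equalizer (aeval x) (aeval 0) (fun p hp => by simpa using hs p hp) hf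

variable [Fintype σ]

theorem eval_esymm_eq_zero_of_prod_X_sub_C_eq_X_pow_sub_one {x : σ → R}
    (hx : ∏ i, (Polynomial.X - Polynomial.C (x i)) = Polynomial.X ^ Fintype.card σ - 1)
    {j : ℕ} (hj₀ : 0 < j) (hj : j < Fintype.card σ) : eval x (esymm σ R j) = 0 := by
  rw [← aeval_eq_eval, aeval_esymm_eq_multiset_esymm]
  refine Multiset.esymm_eq_zero_of_prod_X_sub_C_eq_X_pow_sub_one ?_ hj₀ (by simpa using hj)
  simpa [Multiset.map_map] using hx

theorem constantCoeff_esymm {j : ℕ} (hj : j ≠ 0) : constantCoeff (esymm σ R j) = 0 := by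
  rw [← eval_zero, esymm, map_sum]
  refine Finset.sum_eq_zero fun t ht => ?_
  obtain ⟨i, hi⟩ :=
    Finset.card_pos.mp ((Finset.mem_powersetCard.mp ht).2 ▸ Nat.pos_of_ne_zero hj)
  rw [map_prod]
  exact Finset.prod_eq_zero hi (by simp)

theorem eval_esymm_card (x : σ → R) : eval x (esymm σ R (Fintype.card σ)) = ∏ i, x i := by
  rw [esymm, ← Finset.card_univ, Finset.powersetCard_self]
  simp

end MvPolynomial

open Complex MvPolynomial

theorem stmt_9 (n : ℕ) (hn : 2 ≤ n) (ε : ℂ)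
    (hε : ε = Complex.exp (2 * Real.pi * Complex.I / n))
    (X₁ : Fin n → ℂ) (hX : ∀ i : Fin n, X₁ i = ε ^ (n - 1 - (i : ℕ))) :
    (∀ f ∈ Algebra.adjoin ℂ {P : MvPolynomial (Fin n) ℂ |
        ∃ j, 2 ≤ j ∧ j ≤ n - 1 ∧ P = MvPolynomial.esymm (Fin n) ℂ j},
      MvPolynomial.coeff 0 f = 0 → MvPolynomial.eval X₁ f = 0) ∧
    MvPolynomial.esymm (Fin n) ℂ n ∉
      Algebra.adjoin ℂ {P : MvPolynomial (Fin n) ℂ |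
        ∃ j, 2 ≤ j ∧ j ≤ n - 1 ∧ P = MvPolynomial.esymm (Fin n) ℂ j} := by
  have hprim : IsPrimitiveRoot ε n := hε ▸ Complex.isPrimitiveRoot_exp n (by omega)
  have hprod : ∏ i, (Polynomial.X - Polynomial.C (X₁ i)) =
      Polynomial.X ^ Fintype.card (Fin n) - 1 := by
    simp_rw [hX, Fintype.card_fin]
    exact hprim.prod_X_sub_C_pow_rev_eq_X_pow_sub_one (by omega)
  have hgen : ∀ p ∈ {P : MvPolynomial (Fin n) ℂ |
      ∃ j, 2 ≤ j ∧ j ≤ n - 1 ∧ P = MvPolynomial.esymm (Fin n) ℂ j},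
      eval X₁ p = constantCoeff p := by
    rintro _ ⟨j, hj₂, hjn, rfl⟩
    rw [eval_esymm_eq_zero_of_prod_X_sub_C_eq_X_pow_sub_one hprod (by omega)
      (by rw [Fintype.card_fin]; omega), constantCoeff_esymm (by omega)]
  refine ⟨fun f hf hf₀ => ?_, fun hmem => ?_⟩
  · rwa [eval_eq_constantCoeff_of_mem_adjoin hgen hf, constantCoeff_eq]
  · have hPn := eval_eq_constantCoeff_of_mem_adjoin hgen hmem
    have heval := eval_esymm_card X₁
    rw [Fintype.card_fin] at heval
    rw [heval, constantCoeff_esymm (by omega)] at hPn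
    have hprod_ne : ∏ i, X₁ i ≠ 0 :=
      Finset.prod_ne_zero_iff.mpr fun i _ => hX i ▸ pow_ne_zero _ (hprim.ne_zero (by omega))
    exact hprod_ne hPn
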